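/- arXiv:1304.0157 — 3 statements merged into one kernel-verified Lean document; each statement's English description precedes it below -/
import Mathlib

section
/- Let f : [0, ∞) → ℝ be a continuous convex function with f(0) ≤ 0, let M > 0 be a scalar, and let C_1,…,C_n be positive operators in B(H) with 0 ≤ C_i ≤ M·I for each i and M·I ≤ Σ_{i=1}^n C_i. Then Σ_i f(C_i) ≤ f(Σ_i C_i) − δ_f · Σ_i C̃_i ≤ f(Σ_i C_i), where δ_f = f(0) + f(M) − 2 f(M/2) and C̃_i = (1/2)·I − |(1/M)·C_i − (1/2)·I|. -/
/-!
With `tent M t = 1/2 - |t/M - 1/2|`, writing `t ∈ [0, M]` as a convex combination of `0` and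
`M/2` (or of `M/2` and `M`) refines Jensen's inequality to
`f t + δ_f · tent M t ≤ (1 - t/M) f 0 + (t/M) f M ≤ (f M / M) t`.
Through the functional calculus this bounds `f(C_i) + δ_f C̃_i` by `(f M / M) C_i`; summing, it
remains to see `(f M / M) S ≤ f(S)` for `S = Σ C_i`, which holds because the spectrum of `S` lies
in `[M, ∞)` and the secant slopes of `f` from `0` increase. The second inequality is `δ_f ≥ 0`
(midpoint convexity) together with `C̃_i ≥ 0`.
-/

noncomputable def opAbs {H : Type*} [NormedAddCommGroup H] [InnerProductSpace ℂ H]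
    [CompleteSpace H] (A : H →L[ℂ] H) : H →L[ℂ] H :=
  cfc (fun t : ℝ => |t|) A

open Set

noncomputable def tent (M t : ℝ) : ℝ := 1 / 2 - |M⁻¹ * t - 1 / 2|

@[fun_prop]
lemma continuous_tent (M : ℝ) : Continuous (tent M) := by
  unfold tent; fun_prop

lemma tent_nonneg {M t : ℝ} (hM : 0 < M) (ht : t ∈ Icc 0 M) : 0 ≤ tent M t := by
  have h0 : 0 ≤ M⁻¹ * t := mul_nonneg (inv_nonneg.2 hM.le) ht.1
  have h1 : M⁻¹ * t ≤ 1 := by rw [inv_mul_le_one₀ hM]; exact ht.2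
  rw [tent, sub_nonneg, abs_le]
  constructor <;> linarith

variable {f : ℝ → ℝ} {M : ℝ}

lemma ConvexOn.two_mul_le_add {s : Set ℝ} (hf : ConvexOn ℝ s f) {x y : ℝ} (hx : x ∈ s)
    (hy : y ∈ s) : 2 * f ((x + y) / 2) ≤ f x + f y := by
  have h := hf.2 hx hy (by norm_num : (0 : ℝ) ≤ 1 / 2) (by norm_num : (0 : ℝ) ≤ 1 / 2) (by norm_num)
  rw [show (1 / 2 : ℝ) • x + (1 / 2 : ℝ) • y = (x + y) / 2 by simp only [smul_eq_mul]; ring] at h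
  simp only [smul_eq_mul] at h
  linarith

lemma ConvexOn.add_mul_tent_le (hf : ConvexOn ℝ (Icc 0 M) f) (hM : 0 < M) {t : ℝ}
    (ht : t ∈ Icc 0 M) :
    f t + (f 0 + f M - 2 * f (M / 2)) * tent M t ≤ (1 - M⁻¹ * t) * f 0 + M⁻¹ * t * f M := by
  have hM0 : (0 : ℝ) ∈ Icc 0 M := left_mem_Icc.2 hM.le
  have hMM : M ∈ Icc 0 M := right_mem_Icc.2 hM.le
  have hM2 : M / 2 ∈ Icc 0 M := ⟨by positivity, by linarith⟩
  set l := M⁻¹ * t with hl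
  have htl : t = l * M := by rw [hl]; field_simp
  have hl0 : 0 ≤ l := mul_nonneg (inv_nonneg.2 hM.le) ht.1
  have hl1 : l ≤ 1 := by rw [hl, inv_mul_le_one₀ hM]; exact ht.2
  rcases le_total l (1 / 2) with hl2 | hl2
  · have hconv := hf.2 hM0 hM2 (by linarith : 0 ≤ 1 - 2 * l) (by linarith : 0 ≤ 2 * l) (by ring)
    simp only [smul_eq_mul, mul_zero, zero_add] at hconv
    rw [show 2 * l * (M / 2) = t by rw [htl]; ring] at hconv
    have htent : tent M t = l := by
      rw [tent, ← hl, abs_of_nonpos (by linarith)]; ring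
    rw [htent]
    linear_combination hconv
  · have hconv :=
      hf.2 hM2 hMM (by linarith : 0 ≤ 2 - 2 * l) (by linarith : 0 ≤ 2 * l - 1) (by ring)
    simp only [smul_eq_mul] at hconv
    rw [show (2 - 2 * l) * (M / 2) + (2 * l - 1) * M = t by rw [htl]; ring] at hconv
    have htent : tent M t = 1 - l := by
      rw [tent, ← hl, abs_of_nonneg (by linarith)]; ring
    rw [htent]
    linear_combination hconv

lemma ConvexOn.div_mul_le_of_le (hf : ConvexOn ℝ (Ici 0) f) (hf0 : f 0 ≤ 0) (hM : 0 < M) {x : ℝ}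
    (hx : M ≤ x) : f M / M * x ≤ f x := by
  have hx0 : 0 < x := hM.trans_le hx
  have hsec := hf.secant_mono self_mem_Ici hM.le (hx0.le : x ∈ Ici 0) hM.ne' hx0.ne' hx
  rw [sub_zero, sub_zero, div_le_div_iff₀ hM hx0] at hsec
  rw [div_mul_eq_mul_div, div_le_iff₀ hM]
  nlinarith [mul_nonpos_of_nonpos_of_nonneg hf0 (sub_nonneg.2 hx)]

section CStarAlgebra

variable {A : Type*} [CStarAlgebra A] [PartialOrder A] [StarOrderedRing A]

lemma spectrum_subset_Icc_of_nonneg_of_le {a : A} (ha0 : 0 ≤ a) (haM : a ≤ M • 1) :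
    spectrum ℝ a ⊆ Icc 0 M := by
  rw [← Algebra.algebraMap_eq_smul_one, le_algebraMap_iff_spectrum_le] at haM
  exact fun x hx ↦ ⟨spectrum_nonneg_of_nonneg ha0 hx, haM x hx⟩

lemma spectrum_subset_Ici_of_smul_one_le {a : A} (ha : IsSelfAdjoint a)
    (hMa : M • 1 ≤ a) : spectrum ℝ a ⊆ Ici M := by
  rwa [← Algebra.algebraMap_eq_smul_one, algebraMap_le_iff_le_spectrum] at hMa

lemma cfc_add_smul_cfc_tent_le (hf : ContinuousOn f (Icc 0 M))
    (hconv : ConvexOn ℝ (Icc 0 M) f) (hf0 : f 0 ≤ 0) (hM : 0 < M) {a : A} (ha0 : 0 ≤ a)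
    (haM : a ≤ M • 1) :
    cfc f a + (f 0 + f M - 2 * f (M / 2)) • cfc (tent M) a ≤ (f M / M) • a := by
  have hspec := spectrum_subset_Icc_of_nonneg_of_le ha0 haM
  have ha : IsSelfAdjoint a := .of_nonneg ha0
  have hfa : ContinuousOn f (spectrum ℝ a) := hf.mono hspec
  rw [← cfc_const_mul .., ← cfc_add .., ← cfc_const_mul_id ..]
  refine cfc_mono (fun t ht ↦ ?_) (hfa.add (by fun_prop))
  have hl1 : M⁻¹ * t ≤ 1 := by rw [inv_mul_le_one₀ hM]; exact (hspec ht).2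
  calc f t + (f 0 + f M - 2 * f (M / 2)) * tent M t
      ≤ (1 - M⁻¹ * t) * f 0 + M⁻¹ * t * f M := hconv.add_mul_tent_le hM (hspec ht)
    _ ≤ M⁻¹ * t * f M := by
      linarith [mul_nonpos_of_nonneg_of_nonpos (sub_nonneg.2 hl1) hf0]
    _ = f M / M * t := by ring

lemma smul_le_cfc_of_smul_one_le (hf : ContinuousOn f (Ici 0))
    (hconv : ConvexOn ℝ (Ici 0) f) (hf0 : f 0 ≤ 0) (hM : 0 < M) {a : A} (hMa : M • 1 ≤ a) :
    (f M / M) • a ≤ cfc f a := by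
  have ha : IsSelfAdjoint a := .of_nonneg <| (smul_nonneg hM.le zero_le_one).trans hMa
  have hspec := spectrum_subset_Ici_of_smul_one_le ha hMa
  rw [← cfc_const_mul_id (f M / M) a]
  exact cfc_mono (fun x hx ↦ hconv.div_mul_le_of_le hf0 hM (hspec hx))
    (by fun_prop) (hf.mono fun x hx ↦ hM.le.trans (hspec hx))

end CStarAlgebra

lemma half_smul_one_sub_opAbs_eq_cfc_tent {H : Type*} [NormedAddCommGroup H]
    [InnerProductSpace ℂ H] [CompleteSpace H] (M : ℝ) {a : H →L[ℂ] H} (ha : IsSelfAdjoint a) :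
    (1 / 2 : ℝ) • (1 : H →L[ℂ] H) - opAbs (M⁻¹ • a - (1 / 2 : ℝ) • 1) = cfc (tent M) a := by
  have hlin : M⁻¹ • a - (1 / 2 : ℝ) • (1 : H →L[ℂ] H) = cfc (fun t ↦ M⁻¹ * t - 1 / 2) a := by
    rw [cfc_sub .., cfc_const_mul_id .., cfc_const .., Algebra.algebraMap_eq_smul_one]
  unfold tent
  rw [hlin, opAbs, ← cfc_comp' (fun t ↦ |t|) _ a, cfc_sub .., cfc_const ..,
    Algebra.algebraMap_eq_smul_one]

/-- Theorem 3.5 of the paper: refined superadditivity. -/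
theorem superadditive_refined {H : Type*} [NormedAddCommGroup H] [InnerProductSpace ℂ H]
    [CompleteSpace H] {n : ℕ} (f : ℝ → ℝ) (hf : ContinuousOn f (Set.Ici 0))
    (hconv : ConvexOn ℝ (Set.Ici 0) f) (hf0 : f 0 ≤ 0) (M : ℝ) (hM : 0 < M)
    (C : Fin n → H →L[ℂ] H) (hCpos : ∀ i, 0 ≤ C i) (hCu : ∀ i, C i ≤ M • 1)
    (hCsum : M • (1 : H →L[ℂ] H) ≤ ∑ i, C i) :
    ∑ i, cfc f (C i) ≤
        cfc f (∑ i, C i) -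
          (f 0 + f M - 2 * f (M / 2)) •
            ∑ i,
              ((1 / 2 : ℝ) • (1 : H →L[ℂ] H) -
                opAbs (M⁻¹ • C i - (1 / 2 : ℝ) • 1)) ∧
      cfc f (∑ i, C i) -
          (f 0 + f M - 2 * f (M / 2)) •
            ∑ i,
              ((1 / 2 : ℝ) • (1 : H →L[ℂ] H) -
                opAbs (M⁻¹ • C i - (1 / 2 : ℝ) • 1)) ≤
        cfc f (∑ i, C i) := by
  simp only [fun i ↦ half_smul_one_sub_opAbs_eq_cfc_tent M (IsSelfAdjoint.of_nonneg (hCpos i))]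
  have hconvM : ConvexOn ℝ (Icc 0 M) f := hconv.subset Icc_subset_Ici_self (convex_Icc 0 M)
  have hδ : 0 ≤ f 0 + f M - 2 * f (M / 2) := by
    simpa using hconv.two_mul_le_add self_mem_Ici (hM.le : M ∈ Ici 0)
  refine ⟨le_sub_iff_add_le.2 ?_, sub_le_self _ ?_⟩
  · calc ∑ i, cfc f (C i) + (f 0 + f M - 2 * f (M / 2)) • ∑ i, cfc (tent M) (C i)
        = ∑ i, (cfc f (C i) + (f 0 + f M - 2 * f (M / 2)) • cfc (tent M) (C i)) := by
          rw [Finset.smul_sum, Finset.sum_add_distrib]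
      _ ≤ ∑ i, (f M / M) • C i := Finset.sum_le_sum fun i _ ↦
          cfc_add_smul_cfc_tent_le (hf.mono Icc_subset_Ici_self) hconvM hf0 hM (hCpos i) (hCu i)
      _ = (f M / M) • ∑ i, C i := Finset.smul_sum.symm
      _ ≤ cfc f (∑ i, C i) := smul_le_cfc_of_smul_one_le hf hconv hf0 hM hCsum
  · exact smul_nonneg hδ <| Finset.sum_nonneg fun i _ ↦ cfc_nonneg fun t ht ↦
      tent_nonneg hM (spectrum_subset_Icc_of_nonneg_of_le (hCpos i) (hCu i) ht)
end

section
/- Let m < M be real numbers, let J be an interval containing [m, M], and let f : J → ℝ be a continuous concave function. Let A, B, C, D ∈ σ(J) satisfy A ≤ m·I, m·I ≤ B ≤ M·I, m·I ≤ C ≤ M·I and M·I ≤ D. If either (iii) B + C ≤ A + D and f(M) ≤ f(m), or (iv) A + D ≤ B + C and f(m) ≤ f(M), then f(A) + f(D) ≤ f(A) + f(D) − δ_f · X̃ ≤ f(B) + f(C), where X̃ = I − (1/(M−m))·( |B − ((M+m)/2)·I| + |C − ((M+m)/2)·I| ); that is, f(A) + f(D) − δ_f · X̃ ≤ f(B)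 + f(C) and f(A) + f(D) ≤ f(A) + f(D) − δ_f · X̃ (since δ_f ≤ 0 for concave f). -/
open Set

section Scalar

variable {𝕜 : Type*} [Field 𝕜] [LinearOrder 𝕜] [IsStrictOrderedRing 𝕜] {J : Set 𝕜}
  {f : 𝕜 → 𝕜} {m M : 𝕜}

theorem ConcaveOn.sub_mul_add_sub_mul_le {x y z : 𝕜} (hf : ConcaveOn 𝕜 J f) (hx : x ∈ J)
    (hz : z ∈ J) (hxy : x ≤ y) (hyz : y ≤ z) :
    (z - y) * f x + (y - x) * f z ≤ (z - x) * f y := by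
  rcases hxy.eq_or_lt with rfl | hxy
  · simp
  rcases hyz.eq_or_lt with rfl | hyz
  · simp
  have := hf.neg.secant_mono_aux1 hx hz hxy hyz
  simp only [Pi.neg_apply] at this
  linarith

theorem ConcaveOn.add_le_two_mul_midpoint (hf : ConcaveOn 𝕜 J f) (hm : m ∈ J) (hM : M ∈ J) :
    f m + f M ≤ 2 * f ((m + M) / 2) := by
  have := hf.2 hm hM (by norm_num : (0 : 𝕜) ≤ 1 / 2) (by norm_num : (0 : 𝕜) ≤ 1 / 2)
    (by norm_num)
  simp only [smul_eq_mul] at this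
  rw [show 1 / 2 * m + 1 / 2 * M = (m + M) / 2 by ring] at this
  linarith

theorem ConcaveOn.le_chord_of_notMem_Ioo {x : 𝕜} (hf : ConcaveOn 𝕜 J f) (hm : m ∈ J)
    (hM : M ∈ J) (hx : x ∈ J) (hmM : m < M) (hxmM : x ∉ Ioo m M) :
    f x ≤ f m + (f M - f m) / (M - m) * (x - m) := by
  have hMm : 0 < M - m := sub_pos.mpr hmM
  rw [div_mul_eq_mul_div, ← sub_le_iff_le_add', le_div_iff₀ hMm]
  rcases le_or_gt x m with hxm | hmx
  · linear_combination hf.sub_mul_add_sub_mul_le hx hM hxm hmM.le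
  · have hMx : M ≤ x := not_lt.mp (hxmM ⟨hmx, ·⟩)
    linear_combination hf.sub_mul_add_sub_mul_le hm hx hmM.le hMx

theorem ConcaveOn.brokenChord_le {x : 𝕜} (hf : ConcaveOn 𝕜 J f) (hJ : Icc m M ⊆ J)
    (hx : x ∈ Icc m M) :
    f m - (f m + f M - 2 * f ((m + M) / 2)) / 2 + (f M - f m) / (M - m) * (x - m)
      + (f m + f M - 2 * f ((m + M) / 2)) / (M - m) * |x - (m + M) / 2| ≤ f x := by
  obtain ⟨hmx, hxM⟩ := hx
  rcases (hmx.trans hxM).eq_or_lt with rfl | hmM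
  · obtain rfl : x = m := le_antisymm hxM hmx
    simp [← two_mul]
  have hMm : 0 < M - m := sub_pos.mpr hmM
  have hm : m ∈ J := hJ ⟨le_rfl, hmx.trans hxM⟩
  have hM : M ∈ J := hJ ⟨hmx.trans hxM, le_rfl⟩
  have hc : (m + M) / 2 ∈ J := hJ ⟨by linarith, by linarith⟩
  rcases le_total x ((m + M) / 2) with hxc | hcx
  · have key := hf.sub_mul_add_sub_mul_le hm hc hmx hxc
    rw [abs_of_nonpos (sub_nonpos.mpr hxc), ← sub_nonneg]
    field_simp
    linarith
  · have key := hf.sub_mul_add_sub_mul_le hc hM hcx hxM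
    rw [abs_of_nonneg (sub_nonneg.mpr hcx), ← sub_nonneg]
    field_simp
    linarith

end Scalar

section Operator

variable {𝔸 : Type*} [CStarAlgebra 𝔸] {a : 𝔸}
  {J : Set ℝ} {f : ℝ → ℝ} {m M r s : ℝ}

theorem cfc_const_add_mul_sub (ha : IsSelfAdjoint a) :
    cfc (fun t : ℝ => r + s * (t - m)) a = r • 1 + s • (a - m • 1) := by
  rw [cfc_const_add r _ a, cfc_const_mul s _ a, cfc_sub _ _ a, cfc_id' ℝ a, cfc_const m a,
    Algebra.algebraMap_eq_smul_one, Algebra.algebraMap_eq_smul_one]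

variable [PartialOrder 𝔸] [StarOrderedRing 𝔸]

theorem le_smul_one_iff_spectrum_le (ha : IsSelfAdjoint a) :
    a ≤ r • 1 ↔ ∀ x ∈ spectrum ℝ a, x ≤ r := by
  rw [← Algebra.algebraMap_eq_smul_one]
  exact le_algebraMap_iff_spectrum_le ha

theorem smul_one_le_iff_le_spectrum (ha : IsSelfAdjoint a) :
    r • 1 ≤ a ↔ ∀ x ∈ spectrum ℝ a, r ≤ x := by
  rw [← Algebra.algebraMap_eq_smul_one]
  exact algebraMap_le_iff_le_spectrum ha

theorem spectrum_subset_Icc_of_le (ha : IsSelfAdjoint a) (hm : m • 1 ≤ a) (hM : a ≤ M • 1) :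
    spectrum ℝ a ⊆ Icc m M := fun x hx =>
  ⟨(smul_one_le_iff_le_spectrum ha).mp hm x hx, (le_smul_one_iff_spectrum_le ha).mp hM x hx⟩

theorem cfc_le_chord (hf : ConcaveOn ℝ J f) (hm : m ∈ J) (hM : M ∈ J) (hmM : m < M)
    (ha : IsSelfAdjoint a) (haJ : spectrum ℝ a ⊆ J) (hfa : ContinuousOn f (spectrum ℝ a))
    (hout : ∀ x ∈ spectrum ℝ a, x ∉ Ioo m M) :
    cfc f a ≤ f m • 1 + ((f M - f m) / (M - m)) • (a - m • 1) := by
  rw [← cfc_const_add_mul_sub ha]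
  exact cfc_mono (fun x hx => hf.le_chord_of_notMem_Ioo hm hM (haJ hx) hmM (hout x hx))

theorem brokenChord_le_cfc (hf : ConcaveOn ℝ J f) (hJ : Icc m M ⊆ J) (ha : IsSelfAdjoint a)
    (haI : spectrum ℝ a ⊆ Icc m M) (hfa : ContinuousOn f (spectrum ℝ a)) :
    (f m - (f m + f M - 2 * f ((m + M) / 2)) / 2) • 1 + ((f M - f m) / (M - m)) • (a - m • 1)
        + ((f m + f M - 2 * f ((m + M) / 2)) / (M - m)) •
          cfc (fun t : ℝ => |t - (m + M) / 2|) a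
      ≤ cfc f a := by
  refine le_of_eq_of_le ?_ (cfc_mono fun x hx => hf.brokenChord_le hJ (haI hx))
  set δ := f m + f M - 2 * f ((m + M) / 2)
  rw [cfc_add (a := a) (fun t => f m - δ / 2 + (f M - f m) / (M - m) * (t - m))
    (fun t => δ / (M - m) * |t - (m + M) / 2|), cfc_const_add_mul_sub ha, cfc_const_mul _ _ a]

theorem cfc_abs_sub_midpoint_le (ha : IsSelfAdjoint a) (haI : spectrum ℝ a ⊆ Icc m M) :
    cfc (fun t : ℝ => |t - (m + M) / 2|) a ≤ ((M - m) / 2) • 1 := by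
  rw [← Algebra.algebraMap_eq_smul_one]
  refine cfc_le_algebraMap _ _ a fun x hx => abs_le.mpr ?_
  obtain ⟨hmx, hxM⟩ := haI hx
  constructor <;> linarith

end Operator

theorem opAbs_sub_smul_one {H : Type*} [NormedAddCommGroup H] [InnerProductSpace ℂ H]
    [CompleteSpace H] {a : H →L[ℂ] H} (ha : IsSelfAdjoint a) (c : ℝ) :
    opAbs (a - c • 1) = cfc (fun t : ℝ => |t - c|) a := by
  rw [cfc_comp' (fun t : ℝ => |t|) (fun t => t - c) a, cfc_sub _ _ a, cfc_id' ℝ a,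
    cfc_const c a, Algebra.algebraMap_eq_smul_one, opAbs]

theorem jensen_type_without_sum_condition_concave_general {H : Type*} [NormedAddCommGroup H]
    [InnerProductSpace ℂ H] [CompleteSpace H] (m M : ℝ) (hmM : m < M) (J : Set ℝ)
    (hJmM : Set.Icc m M ⊆ J) (f : ℝ → ℝ)
    (hf : ContinuousOn f J) (hconc : ConcaveOn ℝ J f)
    (A B C D : H →L[ℂ] H)
    (hAsa : IsSelfAdjoint A) (hAspec : spectrum ℝ A ⊆ J)
    (hBsa : IsSelfAdjoint B) (hBspec : spectrum ℝ B ⊆ J)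
    (hCsa : IsSelfAdjoint C) (hCspec : spectrum ℝ C ⊆ J)
    (hDsa : IsSelfAdjoint D) (hDspec : spectrum ℝ D ⊆ J)
    (hA : A ≤ m • 1) (hBl : m • 1 ≤ B) (hBu : B ≤ M • 1)
    (hCl : m • 1 ≤ C) (hCu : C ≤ M • 1) (hD : M • 1 ≤ D)
    (hcond : (B + C ≤ A + D ∧ f M ≤ f m) ∨ (A + D ≤ B + C ∧ f m ≤ f M)) :
    cfc f A + cfc f D ≤
        cfc f A + cfc f D -
          (f m + f M - 2 * f ((m + M) / 2)) •
            ((1 : H →L[ℂ] H) -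
              (M - m)⁻¹ •
                (opAbs (B - ((M + m) / 2) • 1) + opAbs (C - ((M + m) / 2) • 1))) ∧
      cfc f A + cfc f D -
          (f m + f M - 2 * f ((m + M) / 2)) •
            ((1 : H →L[ℂ] H) -
              (M - m)⁻¹ •
                (opAbs (B - ((M + m) / 2) • 1) + opAbs (C - ((M + m) / 2) • 1))) ≤
        cfc f B + cfc f C := by
  have hm : m ∈ J := hJmM ⟨le_rfl, hmM.le⟩
  have hM : M ∈ J := hJmM ⟨hmM.le, le_rfl⟩
  have hBI := spectrum_subset_Icc_of_le hBsa hBl hBu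
  have hCI := spectrum_subset_Icc_of_le hCsa hCl hCu
  rw [add_comm M m, opAbs_sub_smul_one hBsa, opAbs_sub_smul_one hCsa]
  set δ := f m + f M - 2 * f ((m + M) / 2)
  set β := (f M - f m) / (M - m)
  set P := cfc (fun t : ℝ => |t - (m + M) / 2|) B
  set Q := cfc (fun t : ℝ => |t - (m + M) / 2|) C
  have hδ : δ ≤ 0 := by linarith [hconc.add_le_two_mul_midpoint hm hM]
  have hPQ : (M - m)⁻¹ • (P + Q) ≤ 1 := by
    have := add_le_add (cfc_abs_sub_midpoint_le hBsa hBI) (cfc_abs_sub_midpoint_le hCsa hCI)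
    rw [← add_smul, add_halves] at this
    calc _ ≤ (M - m)⁻¹ • (M - m) • (1 : H →L[ℂ] H) := by gcongr
      _ = 1 := inv_smul_smul₀ (sub_ne_zero.mpr hmM.ne') 1
  refine ⟨(le_sub_self_iff _).mpr
    (smul_nonpos_of_nonpos_of_nonneg hδ (sub_nonneg.mpr hPQ)), ?_⟩
  have hβ : β • (A + D) ≤ β • (B + C) := by
    rcases hcond with ⟨hsum, hfmM⟩ | ⟨hsum, hfmM⟩
    · exact smul_le_smul_of_nonpos_left hsum
        (div_nonpos_of_nonpos_of_nonneg (sub_nonpos.mpr hfmM) (sub_pos.mpr hmM).le)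
    · exact smul_le_smul_of_nonneg_left hsum
        (div_nonneg (sub_nonneg.mpr hfmM) (sub_pos.mpr hmM).le)
  have hA' := cfc_le_chord hconc hm hM hmM hAsa hAspec (hf.mono hAspec) fun x hx hxI =>
    hxI.1.not_ge ((le_smul_one_iff_spectrum_le hAsa).mp hA x hx)
  have hD' := cfc_le_chord hconc hm hM hmM hDsa hDspec (hf.mono hDspec) fun x hx hxI =>
    hxI.2.not_ge ((smul_one_le_iff_le_spectrum hDsa).mp hD x hx)
  have hB' := brokenChord_le_cfc hconc hJmM hBsa hBI (hf.mono hBspec)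
  have hC' := brokenChord_le_cfc hconc hJmM hCsa hCI (hf.mono hCspec)
  calc cfc f A + cfc f D - δ • (1 - (M - m)⁻¹ • (P + Q))
      ≤ f m • 1 + β • (A - m • 1) + (f m • 1 + β • (D - m • 1))
          - δ • (1 - (M - m)⁻¹ • (P + Q)) := by
        gcongr
    _ = (f m - δ / 2) • 1 + β • (B - m • 1) + (δ / (M - m)) • P
          + ((f m - δ / 2) • 1 + β • (C - m • 1) + (δ / (M - m)) • Q)
          - (β • (B + C) - β • (A + D)) := by module
    _ ≤ cfc f B + cfc f C := (sub_le_self _ (sub_nonneg.mpr hβ)).trans (add_le_add hB' hC')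

/-- Theorem 3.7, concave case: the inequality is reversed. -/
theorem jensen_type_without_sum_condition_concave {H : Type*} [NormedAddCommGroup H]
    [InnerProductSpace ℂ H] [CompleteSpace H] (m M : ℝ) (hmM : m < M) (J : Set ℝ)
    (hJ : J.OrdConnected) (hJmM : Set.Icc m M ⊆ J) (f : ℝ → ℝ)
    (hf : ContinuousOn f J) (hconc : ConcaveOn ℝ J f)
    (A B C D : H →L[ℂ] H)
    (hAsa : IsSelfAdjoint A) (hAspec : spectrum ℝ A ⊆ J)
    (hBsa : IsSelfAdjoint B) (hBspec : spectrum ℝ B ⊆ J)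
    (hCsa : IsSelfAdjoint C) (hCspec : spectrum ℝ C ⊆ J)
    (hDsa : IsSelfAdjoint D) (hDspec : spectrum ℝ D ⊆ J)
    (hA : A ≤ m • 1) (hBl : m • 1 ≤ B) (hBu : B ≤ M • 1)
    (hCl : m • 1 ≤ C) (hCu : C ≤ M • 1) (hD : M • 1 ≤ D)
    (hcond : (B + C ≤ A + D ∧ f M ≤ f m) ∨ (A + D ≤ B + C ∧ f m ≤ f M)) :
    cfc f A + cfc f D ≤
        cfc f A + cfc f D -
          (f m + f M - 2 * f ((m + M) / 2)) •
            ((1 : H →L[ℂ] H) -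
              (M - m)⁻¹ •
                (opAbs (B - ((M + m) / 2) • 1) + opAbs (C - ((M + m) / 2) • 1))) ∧
      cfc f A + cfc f D -
          (f m + f M - 2 * f ((m + M) / 2)) •
            ((1 : H →L[ℂ] H) -
              (M - m)⁻¹ •
                (opAbs (B - ((M + m) / 2) • 1) + opAbs (C - ((M + m) / 2) • 1))) ≤
        cfc f B + cfc f C :=
  jensen_type_without_sum_condition_concave_general m M hmM J hJmM f hf hconc A B C D hAsa hAspec
    hBsa hBspec hCsa hCspec hDsa hDspec hA hBl hBu hCl hCu hD hcond
end

section
/- Let m < M be real numbers and let A, B, C, D be self-adjoint operators in B(H) with I ≤ A ≤ m·I, m·I ≤ B ≤ M·I, m·I ≤ C ≤ M·I and M·I ≤ D. Let p, q be real numbers with q ≥ p, and suppose either (i) B + C ≤ A + D and p ≥ 1, or (ii) A + D ≤ B + C and p ≤ 0. Then B^p + C^p ≤ A^q + D^q − δ_p · X̃ ≤ A^q + D^q, where δ_p = m^p + M^p − 2·((m+M)/2)^p, X̃ = I − (1/(M−m))·( |B − ((M+m)/2)·I| + |C − ((M+m)/2)·I| ), and the real powers of these positive invertible operators are defined by the continuous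 functional calculus. -/
/-!
Let `f` be convex and `ℓ` the chord of `f` over `[m, M]`. Applying convexity separately on the
two halves of `[m, M]` improves `f ≤ ℓ` there to `f + δ (1/2 - |t - c| / (M - m)) ≤ ℓ`, where
`c` is the midpoint and `δ = f m + f M - 2 f c ≥ 0`; outside `(m, M)` one has `ℓ ≤ f`. The
functional calculus turns these into operator inequalities for `B, C` and for `A, D`. Since `ℓ`
is affine, `ℓ(B) + ℓ(C) ≤ ℓ(A) + ℓ(D)` as soon as `slope f m M • (B + C) ≤ slope f m M • (A + D)`,
which is what the sign conditions on `p` guarantee for `f t = t ^ p`. Finally `t ^ p ≤ t ^ q` on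
`[1, ∞)`, which contains the spectra of `A` and `D`.
-/

open Set Real

/-- The real power `A^r` of a (positive invertible) bounded operator, via the
continuous functional calculus applied to `t ↦ t ^ r`. -/
noncomputable def opPow {H : Type*} [NormedAddCommGroup H] [InnerProductSpace ℂ H]
    [CompleteSpace H] (A : H →L[ℂ] H) (r : ℝ) : H →L[ℂ] H :=
  cfc (fun t : ℝ => t ^ r) A

theorem convexOn_rpow_of_nonpos {p : ℝ} (hp : p ≤ 0) : ConvexOn ℝ (Ioi 0) fun x : ℝ ↦ x ^ p := by
  have hlog : ConvexOn ℝ (Ioi 0) fun x : ℝ ↦ log x * p :=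
    (strictConcaveOn_log_Ioi.concaveOn.smul (neg_nonneg.2 hp)).neg.congr fun x _ ↦ by
      simp [mul_comm]
  have himage : Convex ℝ ((fun x : ℝ ↦ log x * p) '' Ioi 0) :=
    convex_iff_isPreconnected.2 <| (convex_Ioi 0).isPreconnected.image _ <|
      (continuousOn_log.mono fun _ hx ↦ ne_of_gt hx).mul continuousOn_const
  exact ((convexOn_exp.subset (subset_univ _) himage).comp hlog
    (exp_monotone.monotoneOn _)).congr fun x hx ↦ (rpow_def_of_pos hx p).symm

theorem convexOn_rpow_Ioi {p : ℝ} (hp : 1 ≤ p ∨ p ≤ 0) :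
    ConvexOn ℝ (Ioi 0) fun x : ℝ ↦ x ^ p :=
  hp.elim (fun hp ↦ (convexOn_rpow hp).subset Ioi_subset_Ici_self (convex_Ioi 0))
    convexOn_rpow_of_nonpos

theorem continuousOn_rpow_const_Ioi (p : ℝ) : ContinuousOn (fun x : ℝ ↦ x ^ p) (Ioi 0) :=
  fun x hx ↦ (continuousAt_rpow_const x p (Or.inl (ne_of_gt hx))).continuousWithinAt

noncomputable def chord (f : ℝ → ℝ) (u v t : ℝ) : ℝ := f u + slope f u v * (t - u)

theorem continuous_chord (f : ℝ → ℝ) (u v : ℝ) : Continuous (chord f u v) := by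
  unfold chord; fun_prop

section ConvexOn

variable {s : Set ℝ} {f : ℝ → ℝ} {u v t : ℝ}

theorem ConvexOn.two_mul_apply_midpoint_le (hf : ConvexOn ℝ s f) (hu : u ∈ s) (hv : v ∈ s) :
    2 * f ((u + v) / 2) ≤ f u + f v := by
  have h := hf.2 hu hv (by norm_num : (0 : ℝ) ≤ 1 / 2) (by norm_num : (0 : ℝ) ≤ 1 / 2)
    (by norm_num)
  simp only [smul_eq_mul] at h
  rw [show 1 / 2 * u + 1 / 2 * v = (u + v) / 2 by ring] at h
  linarith

theorem ConvexOn.le_chord (hf : ConvexOn ℝ s f) (hu : u ∈ s) (hv : v ∈ s) (ht : t ∈ Icc u v) :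
    f t ≤ chord f u v t := by
  obtain rfl | hut := ht.1.eq_or_lt
  · simp [chord]
  have hsec := hf.secant_mono hu (hf.1.ordConnected.out hu hv ht) hv hut.ne'
    (hut.trans_le ht.2).ne' ht.2
  rw [div_le_iff₀ (sub_pos.2 hut)] at hsec
  rw [chord, slope_def_field]
  linarith

theorem ConvexOn.chord_le (hf : ConvexOn ℝ s f) (hu : u ∈ s) (hv : v ∈ s) (huv : u < v)
    (ht : t ∈ s \ Ioo u v) : chord f u v t ≤ f t := by
  rw [chord, slope_def_field]
  rcases le_or_gt t u with htu | hut
  · obtain rfl | htu := htu.eq_or_lt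
    · simp
    have hsec := hf.secant_mono hu ht.1 hv htu.ne huv.ne' (htu.trans huv).le
    rw [div_le_iff_of_neg (sub_neg.2 htu)] at hsec
    linarith
  · have hvt : v ≤ t := not_lt.1 fun htv ↦ ht.2 ⟨hut, htv⟩
    have hsec := hf.secant_mono hu hv ht.1 huv.ne' (huv.trans_le hvt).ne' hvt
    rw [le_div_iff₀ (by linarith)] at hsec
    linarith

/-- The chord bound on whichever half of `[u, v]` contains `t`, compared with the full chord. -/
theorem ConvexOn.add_mul_le_chord (hf : ConvexOn ℝ s f) (hu : u ∈ s) (hv : v ∈ s) (huv : u < v)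
    (ht : t ∈ Icc u v) :
    f t + (f u + f v - 2 * f ((u + v) / 2)) * (1 / 2 - (v - u)⁻¹ * |t - (u + v) / 2|) ≤
      chord f u v t := by
  have hc : (u + v) / 2 ∈ s := hf.1.ordConnected.out hu hv ⟨by linarith, by linarith⟩
  have hvu : 0 < v - u := sub_pos.2 huv
  rcases le_total t ((u + v) / 2) with htc | hct
  · have h := hf.le_chord hu hc ⟨ht.1, htc⟩
    rw [abs_of_nonpos (by linarith)]
    rw [chord, slope_def_field, show (u + v) / 2 - u = (v - u) / 2 by ring] at h
    rw [chord, slope_def_field]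
    field_simp at h ⊢
    linarith
  · have h := hf.le_chord hc hv ⟨hct, ht.2⟩
    rw [abs_of_nonneg (by linarith)]
    rw [chord, slope_def_field, show v - (u + v) / 2 = (v - u) / 2 by ring] at h
    rw [chord, slope_def_field]
    field_simp at h ⊢
    linarith

end ConvexOn

section CStarAlgebra

variable {𝒜 : Type*} [CStarAlgebra 𝒜] {a b c d : 𝒜} {s : Set ℝ} {f : ℝ → ℝ} {u v : ℝ}

theorem cfc_comp_sub_smul_one {g : ℝ → ℝ} (hg : Continuous g) (r : ℝ) (ha : IsSelfAdjoint a) :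
    cfc g (a - r • 1) = cfc (fun t ↦ g (t - r)) a := by
  rw [cfc_comp' g (· - r) a, cfc_sub .., cfc_id' ℝ a, cfc_const r a, Algebra.algebraMap_eq_smul_one]

theorem cfc_chord (f : ℝ → ℝ) (u v : ℝ) (ha : IsSelfAdjoint a) :
    cfc (chord f u v) a = f u • 1 + slope f u v • (a - u • 1) := by
  change cfc (fun t ↦ f u + slope f u v * (t - u)) a = _
  rw [cfc_const_add .., cfc_const_mul .., cfc_sub .., cfc_id' ℝ a, cfc_const u a,
    Algebra.algebraMap_eq_smul_one, Algebra.algebraMap_eq_smul_one]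

variable [PartialOrder 𝒜] [StarOrderedRing 𝒜]

theorem spectrum_subset_Icc (ha : IsSelfAdjoint a) {r₁ r₂ : ℝ} (h₁ : r₁ • 1 ≤ a)
    (h₂ : a ≤ r₂ • 1) : spectrum ℝ a ⊆ Icc r₁ r₂ := by
  rw [← Algebra.algebraMap_eq_smul_one] at h₁ h₂
  exact fun x hx ↦ ⟨(algebraMap_le_iff_le_spectrum ha).1 h₁ x hx,
    (le_algebraMap_iff_spectrum_le ha).1 h₂ x hx⟩

theorem spectrum_subset_Ici (ha : IsSelfAdjoint a) {r : ℝ} (h : r • 1 ≤ a) :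
    spectrum ℝ a ⊆ Ici r := by
  rw [← Algebra.algebraMap_eq_smul_one] at h
  exact (algebraMap_le_iff_le_spectrum ha).1 h

theorem cfc_rpow_le_cfc_rpow_of_exponent_le (hspec : spectrum ℝ a ⊆ Ici 1) {p q : ℝ}
    (hpq : p ≤ q) : cfc (fun t : ℝ ↦ t ^ p) a ≤ cfc (fun t : ℝ ↦ t ^ q) a := by
  have hpos : spectrum ℝ a ⊆ Ioi 0 := hspec.trans (Ici_subset_Ioi.2 one_pos)
  exact cfc_mono (fun x hx ↦ rpow_le_rpow_of_exponent_le (hspec hx) hpq)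
    ((continuousOn_rpow_const_Ioi p).mono hpos) ((continuousOn_rpow_const_Ioi q).mono hpos)

theorem zero_le_one_sub_smul_cfc_abs_add (huv : u < v) (hb : IsSelfAdjoint b)
    (hc : IsSelfAdjoint c) (hbs : spectrum ℝ b ⊆ Icc u v) (hcs : spectrum ℝ c ⊆ Icc u v) :
    0 ≤ (1 : 𝒜) - (v - u)⁻¹ •
      (cfc (fun t ↦ |t - (u + v) / 2|) b + cfc (fun t ↦ |t - (u + v) / 2|) c) := by
  have habs {e : 𝒜} (he : IsSelfAdjoint e) (hes : spectrum ℝ e ⊆ Icc u v) :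
      cfc (fun t ↦ |t - (u + v) / 2|) e ≤ ((v - u) / 2) • 1 := by
    rw [← Algebra.algebraMap_eq_smul_one]
    refine cfc_le_algebraMap _ _ e (fun x hx ↦ abs_le.2 ⟨?_, ?_⟩) <;>
      linarith [(hes hx).1, (hes hx).2]
  rw [sub_nonneg]
  calc _ ≤ (v - u)⁻¹ • (((v - u) / 2) • (1 : 𝒜) + ((v - u) / 2) • 1) :=
        smul_le_smul_of_nonneg_left (add_le_add (habs hb hbs) (habs hc hcs))
          (inv_nonneg.2 (sub_pos.2 huv).le)
    _ = 1 := by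
      rw [← add_smul, add_halves, smul_smul, inv_mul_cancel₀ (sub_pos.2 huv).ne', one_smul]

theorem cfc_chord_add_le (ha : IsSelfAdjoint a) (hb : IsSelfAdjoint b) (hc : IsSelfAdjoint c)
    (hd : IsSelfAdjoint d) (h : slope f u v • (b + c) ≤ slope f u v • (a + d)) :
    cfc (chord f u v) b + cfc (chord f u v) c ≤ cfc (chord f u v) a + cfc (chord f u v) d := by
  rw [← sub_nonneg] at h ⊢
  convert h using 1
  rw [cfc_chord f u v ha, cfc_chord f u v hb, cfc_chord f u v hc, cfc_chord f u v hd]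
  module

theorem ConvexOn.cfc_chord_le (hf : ConvexOn ℝ s f) (hfc : ContinuousOn f s) (hu : u ∈ s)
    (hv : v ∈ s) (huv : u < v) (hspec : spectrum ℝ a ⊆ s \ Ioo u v) :
    cfc (chord f u v) a ≤ cfc f a :=
  cfc_mono (fun _ hx ↦ hf.chord_le hu hv huv (hspec hx)) (continuous_chord f u v).continuousOn
    (hfc.mono (hspec.trans sdiff_subset))

theorem ConvexOn.cfc_add_smul_le_cfc_chord (hf : ConvexOn ℝ s f) (hfc : ContinuousOn f s)
    (hu : u ∈ s) (hv : v ∈ s) (huv : u < v) (ha : IsSelfAdjoint a)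
    (hspec : spectrum ℝ a ⊆ Icc u v) :
    cfc f a + (f u + f v - 2 * f ((u + v) / 2)) •
        ((1 / 2 : ℝ) • (1 : 𝒜) - (v - u)⁻¹ • cfc (fun t ↦ |t - (u + v) / 2|) a) ≤
      cfc (chord f u v) a := by
  have hfa : ContinuousOn f (spectrum ℝ a) := hfc.mono (hspec.trans (hf.1.ordConnected.out hu hv))
  calc _ = cfc (fun t ↦ f t + (f u + f v - 2 * f ((u + v) / 2)) *
        (1 / 2 - (v - u)⁻¹ * |t - (u + v) / 2|)) a := by
        rw [cfc_add .., cfc_const_mul .., cfc_sub .., cfc_const .., cfc_const_mul ..,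
          Algebra.algebraMap_eq_smul_one]
    _ ≤ cfc (chord f u v) a :=
      cfc_mono (fun _ hx ↦ hf.add_mul_le_chord hu hv huv (hspec hx)) (by fun_prop)
        (continuous_chord f u v).continuousOn

theorem ConvexOn.cfc_add_cfc_add_smul_le_cfc_add_cfc (hf : ConvexOn ℝ s f)
    (hfc : ContinuousOn f s) (hu : u ∈ s) (hv : v ∈ s) (huv : u < v) (ha : IsSelfAdjoint a)
    (hb : IsSelfAdjoint b) (hc : IsSelfAdjoint c) (hd : IsSelfAdjoint d)
    (has : spectrum ℝ a ⊆ s \ Ioo u v) (hds : spectrum ℝ d ⊆ s \ Ioo u v)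
    (hbs : spectrum ℝ b ⊆ Icc u v) (hcs : spectrum ℝ c ⊆ Icc u v)
    (hslope : slope f u v • (b + c) ≤ slope f u v • (a + d)) :
    cfc f b + cfc f c + (f u + f v - 2 * f ((u + v) / 2)) • ((1 : 𝒜) - (v - u)⁻¹ •
        (cfc (fun t ↦ |t - (u + v) / 2|) b + cfc (fun t ↦ |t - (u + v) / 2|) c)) ≤
      cfc f a + cfc f d :=
  calc _ = (cfc f b + (f u + f v - 2 * f ((u + v) / 2)) •
          ((1 / 2 : ℝ) • (1 : 𝒜) - (v - u)⁻¹ • cfc (fun t ↦ |t - (u + v) / 2|) b)) +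
        (cfc f c + (f u + f v - 2 * f ((u + v) / 2)) •
          ((1 / 2 : ℝ) • (1 : 𝒜) - (v - u)⁻¹ • cfc (fun t ↦ |t - (u + v) / 2|) c)) := by
        module
    _ ≤ cfc (chord f u v) b + cfc (chord f u v) c :=
      add_le_add (hf.cfc_add_smul_le_cfc_chord hfc hu hv huv hb hbs)
        (hf.cfc_add_smul_le_cfc_chord hfc hu hv huv hc hcs)
    _ ≤ cfc (chord f u v) a + cfc (chord f u v) d := cfc_chord_add_le ha hb hc hd hslope
    _ ≤ cfc f a + cfc f d :=
      add_le_add (hf.cfc_chord_le hfc hu hv huv has) (hf.cfc_chord_le hfc hu hv huv hds)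

theorem slope_rpow_smul_add_le {m M p : ℝ} (hm : 0 < m) (hmM : m < M)
    (h : (b + c ≤ a + d ∧ 1 ≤ p) ∨ (a + d ≤ b + c ∧ p ≤ 0)) :
    slope (fun x : ℝ ↦ x ^ p) m M • (b + c) ≤ slope (fun x : ℝ ↦ x ^ p) m M • (a + d) := by
  rcases h with ⟨h, hp⟩ | ⟨h, hp⟩
  · exact smul_le_smul_of_nonneg_left h <| (monotoneOn_rpow_Ici_of_exponent_nonneg
      (by linarith)).slope_nonneg hm.le (hm.trans hmM).le
  · exact smul_le_smul_of_nonpos_left h <| (antitoneOn_rpow_Ioi_of_exponent_nonpos hp).slope_nonpos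
      hm (hm.trans hmM)

end CStarAlgebra

/-- Corollary 3.8 of the paper: power functions. -/
theorem power_inequality_refined {H : Type*} [NormedAddCommGroup H]
    [InnerProductSpace ℂ H] [CompleteSpace H] (m M : ℝ) (hmM : m < M)
    (A B C D : H →L[ℂ] H)
    (hAsa : IsSelfAdjoint A) (hBsa : IsSelfAdjoint B)
    (hCsa : IsSelfAdjoint C) (hDsa : IsSelfAdjoint D)
    (hIA : (1 : H →L[ℂ] H) ≤ A) (hA : A ≤ m • 1)
    (hBl : m • 1 ≤ B) (hBu : B ≤ M • 1)
    (hCl : m • 1 ≤ C) (hCu : C ≤ M • 1) (hD : M • 1 ≤ D)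
    (p q : ℝ) (hpq : p ≤ q)
    (hcond : (B + C ≤ A + D ∧ 1 ≤ p) ∨ (A + D ≤ B + C ∧ p ≤ 0)) :
    opPow B p + opPow C p ≤
        opPow A q + opPow D q -
          (m ^ p + M ^ p - 2 * ((m + M) / 2) ^ p) •
            ((1 : H →L[ℂ] H) -
              (M - m)⁻¹ •
                (opAbs (B - ((M + m) / 2) • 1) + opAbs (C - ((M + m) / 2) • 1))) ∧
      opPow A q + opPow D q -
          (m ^ p + M ^ p - 2 * ((m + M) / 2) ^ p) •
            ((1 : H →L[ℂ] H) -
              (M - m)⁻¹ •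
                (opAbs (B - ((M + m) / 2) • 1) + opAbs (C - ((M + m) / 2) • 1))) ≤
        opPow A q + opPow D q := by
  rcases subsingleton_or_nontrivial H with _ | _
  · exact ⟨(Subsingleton.elim _ _).le, (Subsingleton.elim _ _).le⟩
  have hAs : spectrum ℝ A ⊆ Icc 1 m := spectrum_subset_Icc hAsa (by rwa [one_smul]) hA
  have hBs := spectrum_subset_Icc hBsa hBl hBu
  have hCs := spectrum_subset_Icc hCsa hCl hCu
  have hDs : spectrum ℝ D ⊆ Ici M := spectrum_subset_Ici hDsa hD
  obtain ⟨x₀, hx₀⟩ := ContinuousFunctionalCalculus.spectrum_nonempty (R := ℝ) A hAsa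
  have hm : 1 ≤ m := (hAs hx₀).1.trans (hAs hx₀).2
  have hmpos : m ∈ Ioi 0 := mem_Ioi.2 (by linarith)
  have hMpos : M ∈ Ioi 0 := mem_Ioi.2 (by linarith)
  have hf := convexOn_rpow_Ioi (hcond.imp And.right And.right)
  have hmain := hf.cfc_add_cfc_add_smul_le_cfc_add_cfc (continuousOn_rpow_const_Ioi p) hmpos
    hMpos hmM hAsa hBsa hCsa hDsa
    (fun x hx ↦ ⟨mem_Ioi.2 (by linarith [(hAs hx).1]), fun h ↦ (hAs hx).2.not_gt h.1⟩)
    (fun x hx ↦ ⟨mem_Ioi.2 (by linarith [mem_Ici.1 (hDs hx)]), fun h ↦ (hDs hx).not_gt h.2⟩)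
    hBs hCs (slope_rpow_smul_add_le hmpos hmM hcond)
  rw [add_comm M m]
  simp only [opPow, opAbs, cfc_comp_sub_smul_one continuous_abs _ hBsa,
    cfc_comp_sub_smul_one continuous_abs _ hCsa]
  refine ⟨le_sub_iff_add_le.2 (hmain.trans (add_le_add ?_ ?_)), sub_le_self _ (smul_nonneg ?_ ?_)⟩
  · exact cfc_rpow_le_cfc_rpow_of_exponent_le (hAs.trans Icc_subset_Ici_self) hpq
  · exact cfc_rpow_le_cfc_rpow_of_exponent_le (hDs.trans (Ici_subset_Ici.2 (by linarith))) hpq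
  · exact sub_nonneg.2 (hf.two_mul_apply_midpoint_le hmpos hMpos)
  · exact zero_le_one_sub_smul_cfc_abs_add hmM hBsa hCsa hBs hCs
end
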